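/- Let (X,T) be a dynamical system with fixed points x₁, ..., xₙ (n ≥ 2). If for any neighborhoods W_i of x_i there exists a minimal point y such that for each i = 1,...,n there is n_i ∈ ℤ₊ with T^{n_i} y ∈ W_i, then (x₁, x₂, ..., xₙ) is an essential sequence entropy n-tuple of (X,T). -/

import Mathlib

open Filter

variable {X : Type*} [MetricSpace X]

/-- Minimal cardinality of a subcover of the join `⋁_{i=1}^{r} T^{-t_i} U`. -/
noncomputable def coverNum (T : X → X) {k r : ℕ} (U : Fin k → Set X)
    (t : Fin r → ℕ) : ℕ :=
  sInf {m : ℕ | ∃ F : Finset (Fin r → Fin k), F.card = m ∧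
    ∀ x : X, ∃ s ∈ F, ∀ i : Fin r, T^[t i] x ∈ U (s i)}

/-- Topological sequence entropy of the cover `U` along the sequence `A`. -/
noncomputable def seqEnt (T : X → X) {k : ℕ} (U : Fin k → Set X) (A : ℕ → ℕ) : ℝ :=
  Filter.limsup
    (fun r : ℕ => Real.log (coverNum T U fun i : Fin r => A i) / (r : ℝ))
    Filter.atTop

/-- A finite open cover of `X`. -/
def IsOpenCover {k : ℕ} (U : Fin k → Set X) : Prop :=
  (∀ j, IsOpen (U j)) ∧ (⋃ j, U j) = Set.univ

/-- `U` is admissible w.r.t. the tuple `x` if each member of `U` has closure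
missing some coordinate of `x`. -/
def IsAdmissible {k n : ℕ} (x : Fin n → X) (U : Fin k → Set X) : Prop :=
  ∀ j : Fin k, ∃ i : Fin n, x i ∉ closure (U j)

/-- `x` is a sequence entropy `n`-tuple. -/
def IsSeqEntropyTuple (T : X → X) {n : ℕ} (x : Fin n → X) : Prop :=
  (∃ i j, x i ≠ x j) ∧
    ∀ (k : ℕ) (U : Fin k → Set X), IsOpenCover U → IsAdmissible x U →
      ∃ A : ℕ → ℕ, StrictMono A ∧ 0 < seqEnt T U A

/-- `x` is an essential sequence entropy `n`-tuple: pairwise distinct coordinates. -/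
def IsEssentialSETuple (T : X → X) {n : ℕ} (x : Fin n → X) : Prop :=
  Function.Injective x ∧ IsSeqEntropyTuple T x

/-- `(X,T)` is null: it has no sequence entropy pairs. -/
def NullSystem (T : X → X) : Prop :=
  ∀ x y : X, ¬ IsSeqEntropyTuple T ![x, y]

/-- `(x,y)` is a proximal pair. -/
def Proximal (T : X → X) (x y : X) : Prop :=
  ∀ ε > (0 : ℝ), ∃ n : ℕ, dist (T^[n] x) (T^[n] y) < ε

/-- `(X,T)` is distal: the proximal relation is trivial. -/
def Distal (T : X → X) : Prop :=
  ∀ x y : X, Proximal T x y → x = y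

/-- `(x,y)` is regionally proximal. -/
def RegProximal (T : X → X) (x y : X) : Prop :=
  ∀ ε > (0 : ℝ), ∃ (x' y' : X) (n : ℕ),
    dist x x' < ε ∧ dist y y' < ε ∧ dist (T^[n] x') (T^[n] y') < ε

/-- `(X,T)` is equicontinuous. -/
def Equicontinuous' (T : X → X) : Prop :=
  ∀ ε > (0 : ℝ), ∃ δ > (0 : ℝ), ∀ x y : X, dist x y < δ →
    ∀ n : ℕ, dist (T^[n] x) (T^[n] y) < ε

/-- `(X,T)` is mean equicontinuous. -/
def MeanEquicontinuous (T : X → X) : Prop :=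
  ∀ ε > (0 : ℝ), ∃ δ > (0 : ℝ), ∀ x y : X, dist x y < δ →
    Filter.limsup
      (fun n : ℕ => (∑ i ∈ Finset.range n, dist (T^[i] x) (T^[i] y)) / (n : ℝ))
      Filter.atTop < ε

/-- `y` is a minimal point of `(X,T)` if the closure of its forward orbit is a
minimal closed invariant set. -/
def IsMinimalPoint (T : X → X) (y : X) : Prop :=
  ∀ A : Set X, IsClosed A → Set.MapsTo T A A → A.Nonempty →
    A ⊆ closure (Set.range fun n : ℕ => T^[n] y) →
    A = closure (Set.range fun n : ℕ => T^[n] y)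

/-! A minimal point returns to each open set it visits with bounded gaps, and shrinking the
neighbourhoods `Wᵢ` of the fixed points `xᵢ` to `⋂_{m ≤ L} T^{-m} Wᵢ` lets one minimal point
realize a new pattern `s` at times perturbed by at most `L` from any prescribed ones. Adding the
patterns one at a time thus gives, for every `r`, times `t₀ < ⋯ < t_{r-1}` at which all `n^r`
patterns of visits to `W₁, …, Wₙ` are realized. Given an admissible cover `U`, each `Uⱼ` misses
some `W_{f j}`, so one member of the join `⋁ᵢ T^{-tᵢ} U` contains points realizing at most
`(n-1)^r` of the patterns; the join thus needs `(n/(n-1))^r` members. Concatenating such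
independent blocks of lengths `2^m` gives a sequence of sequence entropy at least
`log (n/(n-1)) / 2`. -/

open Set

/-- The times `t 0, …, t (r - 1)` form an independence set for `(W₁, …, Wₙ)`. -/
def IsIndependenceSet {Y : Type*} (T : Y → Y) {n : ℕ} (W : Fin n → Set Y) (r : ℕ)
    (t : ℕ → ℕ) : Prop :=
  ∀ s : Fin r → Fin n, ∃ z, ∀ j : Fin r, T^[t j] z ∈ W (s j)

lemma Real.log_natCast_mono : Monotone fun n : ℕ => Real.log n := by
  intro a b hab
  rcases a.eq_zero_or_pos with rfl | ha
  · simpa using Real.log_natCast_nonneg b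
  · exact Real.log_le_log (by exact_mod_cast ha) (by exact_mod_cast hab)

section Recurrence

variable {T : X → X}

lemma mapsTo_closure_range_iterate {Y : Type*} [TopologicalSpace Y] {T : Y → Y}
    (hT : Continuous T) (y : Y) :
    MapsTo T (closure (range fun m : ℕ => T^[m] y)) (closure (range fun m : ℕ => T^[m] y)) :=
  MapsTo.closure (by rintro _ ⟨m, rfl⟩; exact ⟨m + 1, Function.iterate_succ_apply' T m y⟩) hT

lemma IsMinimalPoint.exists_iterate_mem_of_mem_closure (hT : Continuous T) {y z : X}
    (hy : IsMinimalPoint T y) (hz : z ∈ closure (range fun m : ℕ => T^[m] y))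
    {V : Set X} (hV : IsOpen V) (hyV : ∃ m, T^[m] y ∈ V) : ∃ m, T^[m] z ∈ V := by
  obtain ⟨m₀, hm₀⟩ := hyV
  have hsub : closure (range fun m : ℕ => T^[m] z) ⊆ closure (range fun m : ℕ => T^[m] y) :=
    closure_minimal (range_subset_iff.2 fun m => (mapsTo_closure_range_iterate hT y).iterate m hz)
      isClosed_closure
  have horbit := hy _ isClosed_closure (mapsTo_closure_range_iterate hT z)
    ⟨z, subset_closure ⟨0, rfl⟩⟩ hsub
  have hmem : T^[m₀] y ∈ closure (range fun m : ℕ => T^[m] z) :=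
    horbit ▸ subset_closure ⟨m₀, rfl⟩
  obtain ⟨_, hV, m, rfl⟩ := mem_closure_iff.1 hmem V hV hm₀
  exact ⟨m, hV⟩

lemma IsMinimalPoint.exists_bounded_gaps [CompactSpace X] (hT : Continuous T) {y : X}
    (hy : IsMinimalPoint T y) {V : Set X} (hV : IsOpen V) (hyV : ∃ m, T^[m] y ∈ V) :
    ∃ g, ∀ t, ∃ d ≤ g, T^[t + d] y ∈ V := by
  have hcover : closure (range fun m : ℕ => T^[m] y) ⊆ ⋃ m : ℕ, T^[m] ⁻¹' V := fun z hz =>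
    mem_iUnion.2 (hy.exists_iterate_mem_of_mem_closure hT hz hV hyV)
  obtain ⟨F, hF⟩ := isClosed_closure.isCompact.elim_finite_subcover _
    (fun m => hV.preimage (hT.iterate m)) hcover
  refine ⟨F.sup id, fun t => ?_⟩
  obtain ⟨d, hdF, hd⟩ := mem_iUnion₂.1 (hF (subset_closure ⟨t, rfl⟩))
  exact ⟨d, F.le_sup (f := id) hdF, by rwa [add_comm, Function.iterate_add_apply]⟩

lemma exists_uniform_bounded_gaps [CompactSpace X] (hT : Continuous T) {n : ℕ} {x : Fin n → X}
    (hmin : ∀ W : Fin n → Set X, (∀ i, IsOpen (W i)) → (∀ i, x i ∈ W i) →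
      ∃ y : X, IsMinimalPoint T y ∧ ∀ i, ∃ m : ℕ, T^[m] y ∈ W i)
    (W : Fin n → Set X) (hW : ∀ i, IsOpen (W i)) (hxW : ∀ i, x i ∈ W i) :
    ∃ (y : X) (g : ℕ), ∀ i t, ∃ d ≤ g, T^[t + d] y ∈ W i := by
  obtain ⟨y, hy, hvisit⟩ := hmin W hW hxW
  choose g hg using fun i => hy.exists_bounded_gaps hT (hW i) (hvisit i)
  refine ⟨y, Finset.univ.sup g, fun i t => ?_⟩
  obtain ⟨d, hd, hdW⟩ := hg i t
  exact ⟨d, hd.trans (Finset.le_sup (Finset.mem_univ i)), hdW⟩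

end Recurrence

section Independence

variable {T : X → X} {n : ℕ} {x : Fin n → X} (hT : Continuous T) (hfix : ∀ i, T (x i) = x i)
  (hgaps : ∀ W : Fin n → Set X, (∀ i, IsOpen (W i)) → (∀ i, x i ∈ W i) →
    ∃ (y : X) (g : ℕ), ∀ i t, ∃ d ≤ g, T^[t + d] y ∈ W i)
  {W : Fin n → Set X} (hW : ∀ i, IsOpen (W i)) (hxW : ∀ i, x i ∈ W i)
include hT hfix hgaps hW hxW

lemma exists_nearby_times_realizing {r : ℕ} (P : Finset (Fin r → Fin n)) :
    ∃ L, ∀ a : ℕ → ℕ, ∃ t : ℕ → ℕ, (∀ j, a j ≤ t j ∧ t j ≤ a j + L) ∧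
      ∀ s ∈ P, ∃ z, ∀ j : Fin r, T^[t j] z ∈ W (s j) := by
  classical
  induction P using Finset.induction_on with
  | empty => exact ⟨0, fun a => ⟨a, fun j => ⟨le_rfl, le_rfl⟩, by simp⟩⟩
  | insert s P _ ih =>
    obtain ⟨L, hL⟩ := ih
    -- a visit to `V i` at time `c` is a visit to `W i` at every time in `[c, c + L]`
    set V : Fin n → Set X := fun i => ⋂ m ∈ Finset.range (L + 1), T^[m] ⁻¹' W i
    have hV : ∀ i, IsOpen (V i) := fun i =>
      isOpen_biInter_finset fun m _ => (hW i).preimage (hT.iterate m)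
    have hxV : ∀ i, x i ∈ V i := fun i => by
      simp [V, Function.iterate_fixed (hfix i), hxW i]
    obtain ⟨y, g, hy⟩ := hgaps V hV hxV
    refine ⟨g + L, fun a => ?_⟩
    have hc : ∀ j, ∃ c, a j ≤ c ∧ c ≤ a j + g ∧ ∀ hj : j < r, T^[c] y ∈ V (s ⟨j, hj⟩) := by
      intro j
      by_cases hj : j < r
      · obtain ⟨d, hd, hdV⟩ := hy (s ⟨j, hj⟩) (a j)
        exact ⟨a j + d, le_add_right le_rfl, by omega, fun _ => hdV⟩
      · exact ⟨a j, le_rfl, le_add_right le_rfl, fun hj' => absurd hj' hj⟩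
    choose c hac hca hcV using hc
    obtain ⟨t, hct, hP⟩ := hL c
    refine ⟨t, fun j => ⟨(hac j).trans (hct j).1, by linarith [hca j, (hct j).2]⟩, ?_⟩
    rintro s' hs'
    rcases Finset.mem_insert.1 hs' with rfl | hs'
    · refine ⟨y, fun j => ?_⟩
      have hctj := hct j
      have hsplit : T^[t j] y = T^[t j - c j] (T^[c j] y) := by
        rw [← Function.iterate_add_apply, Nat.sub_add_cancel hctj.1]
      rw [hsplit]
      exact mem_iInter₂.1 (hcV j j.2) _ (Finset.mem_range.2 (by omega))
    · exact hP s' hs'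

lemma exists_isIndependenceSet (r N : ℕ) :
    ∃ t : ℕ → ℕ, StrictMono t ∧ N < t 0 ∧ IsIndependenceSet T W r t := by
  obtain ⟨L, hL⟩ := exists_nearby_times_realizing hT hfix hgaps hW hxW Finset.univ
  obtain ⟨t, ht, hreal⟩ := hL fun j => N + 1 + j * (L + 1)
  refine ⟨t, strictMono_nat_of_lt_succ fun j => ?_, by linarith [(ht 0).1],
    fun s => hreal s (Finset.mem_univ s)⟩
  linarith [(ht j).2, (ht (j + 1)).1]

end Independence

section Blocks

/-- The concatenation of the blocks `b m` of length `2 ^ m`: block `m` occupies the positions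
`2 ^ m - 1, …, 2 ^ (m + 1) - 2`. -/
def concatPowTwo (b : ℕ → ℕ → ℕ) (i : ℕ) : ℕ :=
  b (Nat.log 2 (i + 1)) (i + 1 - 2 ^ Nat.log 2 (i + 1))

lemma concatPowTwo_apply (b : ℕ → ℕ → ℕ) {m j : ℕ} (hj : j < 2 ^ m) :
    concatPowTwo b (2 ^ m - 1 + j) = b m j := by
  have hpos := Nat.one_le_two_pow (n := m)
  have hlog : Nat.log 2 (2 ^ m - 1 + j + 1) = m :=
    Nat.log_eq_of_pow_le_of_lt_pow (by omega) (by rw [pow_succ]; omega)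
  simp only [concatPowTwo, hlog]
  congr 1
  omega

lemma strictMono_concatPowTwo {b : ℕ → ℕ → ℕ} (hb : ∀ m, StrictMono (b m))
    (hlink : ∀ m, b m (2 ^ m - 1) < b (m + 1) 0) : StrictMono (concatPowTwo b) := by
  refine strictMono_nat_of_lt_succ fun i => ?_
  set m := Nat.log 2 (i + 1)
  have hlo : 2 ^ m ≤ i + 1 := Nat.pow_log_le_self 2 (by omega)
  have hhi : i + 1 < 2 ^ (m + 1) := Nat.lt_pow_succ_log_self (by norm_num) _
  have hi : i = 2 ^ m - 1 + (i + 1 - 2 ^ m) := by omega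
  rw [pow_succ] at hhi
  by_cases hnext : i + 2 < 2 ^ m * 2
  · rw [hi, concatPowTwo_apply b (by omega), show 2 ^ m - 1 + (i + 1 - 2 ^ m) + 1 =
      2 ^ m - 1 + (i + 2 - 2 ^ m) by omega, concatPowTwo_apply b (by omega)]
    exact hb m (by omega)
  · rw [hi, concatPowTwo_apply b (by omega), show 2 ^ m - 1 + (i + 1 - 2 ^ m) + 1 =
      2 ^ (m + 1) - 1 + 0 by rw [pow_succ]; omega, concatPowTwo_apply b (by positivity),
      show i + 1 - 2 ^ m = 2 ^ m - 1 by omega]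
    exact hlink m

lemma exists_strictMono_of_blocks {P : ℕ → (ℕ → ℕ) → Prop}
    (h : ∀ m N, ∃ t : ℕ → ℕ, StrictMono t ∧ N < t 0 ∧ P m t) :
    ∃ A : ℕ → ℕ, StrictMono A ∧ ∀ m, ∃ b, P m b ∧ ∀ j < 2 ^ m, A (2 ^ m - 1 + j) = b j := by
  choose τ hτ hτ₀ hτP using h
  -- each block starts after the last entry of the previous one
  let start : ℕ → ℕ := fun m => Nat.rec 0 (fun m N => τ m N (2 ^ m - 1)) m
  refine ⟨concatPowTwo fun m => τ m (start m),
    strictMono_concatPowTwo (fun m => hτ _ _) (fun m => hτ₀ (m + 1) (start (m + 1))),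
    fun m => ⟨_, hτP m (start m), fun j hj => concatPowTwo_apply _ hj⟩⟩

end Blocks

section Entropy

variable {Y : Type*} {T : Y → Y} {k n : ℕ} {U : Fin k → Set Y}

lemma exists_card_eq_coverNum (hU : ⋃ j, U j = univ) {r : ℕ} (t : Fin r → ℕ) :
    ∃ F : Finset (Fin r → Fin k), F.card = coverNum T U t ∧
      ∀ z : Y, ∃ s ∈ F, ∀ i, T^[t i] z ∈ U (s i) := by
  refine Nat.sInf_mem (s := {m | ∃ F : Finset (Fin r → Fin k), F.card = m ∧
    ∀ z : Y, ∃ s ∈ F, ∀ i, T^[t i] z ∈ U (s i)}) ⟨_, Finset.univ, rfl, fun z => ?_⟩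
  choose s hs using fun i => mem_iUnion.1 (hU ▸ mem_univ (T^[t i] z))
  exact ⟨s, Finset.mem_univ s, hs⟩

lemma coverNum_le_pow (hU : ⋃ j, U j = univ) {r : ℕ} (t : Fin r → ℕ) :
    coverNum T U t ≤ k ^ r := by
  obtain ⟨F, hF, -⟩ := exists_card_eq_coverNum (T := T) hU t
  rw [← hF]
  simpa using F.card_le_univ

lemma log_coverNum_div_le (hU : ⋃ j, U j = univ) (A : ℕ → ℕ) (r : ℕ) :
    Real.log (coverNum T U fun i : Fin r => A i) / r ≤ Real.log k := by
  rcases r.eq_zero_or_pos with rfl | hr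
  · simpa using Real.log_natCast_nonneg k
  rw [div_le_iff₀ (by exact_mod_cast hr), mul_comm, ← Real.log_pow]
  exact_mod_cast Real.log_natCast_mono (coverNum_le_pow hU _)

lemma pow_le_coverNum_mul (hU : ⋃ j, U j = univ) {W : Fin n → Set Y} {f : Fin k → Fin n}
    (hdisj : ∀ j, Disjoint (U j) (W (f j))) {q r : ℕ} {t : Fin r → ℕ} {J : Fin q → Fin r}
    (hind : ∀ s : Fin q → Fin n, ∃ z, ∀ j, T^[t (J j)] z ∈ W (s j)) :
    n ^ q ≤ coverNum T U t * (n - 1) ^ q := by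
  classical
  obtain ⟨F, hF, hcov⟩ := exists_card_eq_coverNum (T := T) hU t
  choose z hz using hind
  choose σ hσF hσ using fun s => hcov (z s)
  -- the pattern `s` avoids the label `f (σ s (J j))` at each position `j`
  have hmem : ∀ s, s ∈ Fintype.piFinset fun j => Finset.univ.erase (f (σ s (J j))) :=
    fun s => Fintype.mem_piFinset.2 fun j => Finset.mem_erase.2
      ⟨fun h => (hdisj _).le_bot ⟨hσ s (J j), h ▸ hz s j⟩, Finset.mem_univ _⟩
  calc n ^ q = (Finset.univ : Finset (Fin q → Fin n)).card := by simp
    _ ≤ (F.biUnion fun σ => Fintype.piFinset fun j => Finset.univ.erase (f (σ (J j)))).card :=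
      Finset.card_le_card fun s _ => Finset.mem_biUnion.2 ⟨σ s, hσF s, hmem s⟩
    _ ≤ F.card * (n - 1) ^ q := Finset.card_biUnion_le_card_mul _ _ _ fun σ _ => by
      simp [Fintype.card_piFinset, Finset.card_erase_of_mem]
    _ = coverNum T U t * (n - 1) ^ q := by rw [hF]

lemma log_ratio_div_two_le_log_coverNum_div (hU : ⋃ j, U j = univ) (hn : 2 ≤ n)
    {W : Fin n → Set Y} {f : Fin k → Fin n} (hdisj : ∀ j, Disjoint (U j) (W (f j)))
    {A : ℕ → ℕ} {m : ℕ} {b : ℕ → ℕ} (hb : IsIndependenceSet T W (2 ^ m) b)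
    (hAb : ∀ j < 2 ^ m, A (2 ^ m - 1 + j) = b j) :
    (Real.log n - Real.log (n - 1 : ℕ)) / 2 ≤
      Real.log (coverNum T U fun i : Fin (2 ^ (m + 1) - 1) => A i) / (2 ^ (m + 1) - 1 : ℕ) := by
  set C := coverNum T U fun i : Fin (2 ^ (m + 1) - 1) => A i
  have hq := Nat.one_le_two_pow (n := m)
  have hr : 2 ^ (m + 1) - 1 = 2 * 2 ^ m - 1 := by rw [pow_succ, mul_comm]
  have hcount : n ^ 2 ^ m ≤ C * (n - 1) ^ 2 ^ m :=
    pow_le_coverNum_mul hU hdisj (J := fun j => ⟨2 ^ m - 1 + j, by omega⟩) fun s => by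
      obtain ⟨z, hz⟩ := hb s
      exact ⟨z, fun j => by simpa [hAb j j.2] using hz j⟩
  have hC : C ≠ 0 := by
    rintro hC
    simp [hC, Nat.pos_iff_ne_zero.1 (by omega : 0 < n)] at hcount
  have hlogC : (2 ^ m : ℕ) * (Real.log n - Real.log (n - 1 : ℕ)) ≤ Real.log C := by
    have h := Real.log_natCast_mono hcount
    push_cast [Nat.cast_mul, Nat.cast_pow] at h
    rw [Real.log_pow, Real.log_mul (by exact_mod_cast hC)
      (pow_ne_zero _ (by exact_mod_cast (by omega : n - 1 ≠ 0))), Real.log_pow] at h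
    linarith
  have hβ : 0 ≤ Real.log n - Real.log (n - 1 : ℕ) :=
    sub_nonneg.2 (Real.log_natCast_mono (Nat.sub_le n 1))
  have hrpos : (0 : ℝ) < (2 ^ (m + 1) - 1 : ℕ) := by rw [hr]; exact_mod_cast (by omega)
  rw [le_div_iff₀ hrpos]
  calc (Real.log n - Real.log (n - 1 : ℕ)) / 2 * (2 ^ (m + 1) - 1 : ℕ)
      ≤ (Real.log n - Real.log (n - 1 : ℕ)) / 2 * (2 * (2 ^ m : ℕ)) := by
        gcongr
        rw [hr]
        exact_mod_cast (by omega)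
    _ = (2 ^ m : ℕ) * (Real.log n - Real.log (n - 1 : ℕ)) := by ring
    _ ≤ Real.log C := hlogC

end Entropy

lemma IsAdmissible.exists_open_disjoint {k n : ℕ} {x : Fin n → X} {U : Fin k → Set X}
    (h : IsAdmissible x U) : ∃ (W : Fin n → Set X) (f : Fin k → Fin n),
      (∀ i, IsOpen (W i)) ∧ (∀ i, x i ∈ W i) ∧ ∀ j, Disjoint (U j) (W (f j)) := by
  choose f hf using h
  refine ⟨fun i => (⋃ j ∈ {j | f j = i}, closure (U j))ᶜ, f, fun i => ?_, fun i => ?_,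
    fun j => ?_⟩
  · exact ((toFinite _).isClosed_biUnion fun j _ => isClosed_closure).isOpen_compl
  · simp only [mem_compl_iff, mem_iUnion]
    rintro ⟨j, rfl, hj⟩
    exact hf j hj
  · exact disjoint_compl_right_iff_subset.2
      (subset_closure.trans (subset_biUnion_of_mem (u := fun j => closure (U j)) rfl))

theorem isSeqEntropyTuple_of_isIndependenceSet {T : X → X} {n : ℕ} {x : Fin n → X}
    (hne : ∃ i j, x i ≠ x j)
    (hind : ∀ W : Fin n → Set X, (∀ i, IsOpen (W i)) → (∀ i, x i ∈ W i) →
      ∀ r N, ∃ t : ℕ → ℕ, StrictMono t ∧ N < t 0 ∧ IsIndependenceSet T W r t) :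
    IsSeqEntropyTuple T x := by
  refine ⟨hne, fun k U hU hadm => ?_⟩
  have hn : 2 ≤ n := by
    obtain ⟨i, j, hij⟩ := hne
    have : i.val ≠ j.val := fun h => hij (congrArg x (Fin.ext h))
    omega
  obtain ⟨W, f, hW, hxW, hdisj⟩ := hadm.exists_open_disjoint
  obtain ⟨A, hA, hblocks⟩ := exists_strictMono_of_blocks fun m => hind W hW hxW (2 ^ m)
  have hfreq : ∃ᶠ r in atTop, (Real.log n - Real.log (n - 1 : ℕ)) / 2 ≤
      Real.log (coverNum T U fun i : Fin r => A i) / r := by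
    refine frequently_atTop.2 fun r₀ => ⟨2 ^ (r₀ + 1) - 1, ?_, ?_⟩
    · have := Nat.lt_two_pow_self (n := r₀ + 1)
      omega
    · obtain ⟨b, hb, hAb⟩ := hblocks r₀
      exact log_ratio_div_two_le_log_coverNum_div hU.2 hn hdisj hb hAb
  have hratio : 0 < Real.log n - Real.log (n - 1 : ℕ) := sub_pos.2 <|
    Real.log_lt_log (by exact_mod_cast (by omega : 0 < n - 1)) (by exact_mod_cast (by omega))
  exact ⟨A, hA, (half_pos hratio).trans_le <| le_limsup_of_frequently_le hfreq <|
    isBoundedUnder_of ⟨_, log_coverNum_div_le hU.2 A⟩⟩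

/-- if `x₁,…,xₙ` (`n ≥ 2`, pairwise distinct) are fixed points such that
for all neighbourhoods `Wᵢ` of the `xᵢ` some minimal point visits all the `Wᵢ`,
then `(x₁,…,xₙ)` is an essential sequence entropy `n`-tuple. -/
theorem stmt_6 {Y : Type*} [MetricSpace Y] [CompactSpace Y] (T : Y → Y)
    (hT : Continuous T) (n : ℕ) (hn : 2 ≤ n)
    (x : Fin n → Y) (hfix : ∀ i, T (x i) = x i) (hinj : Function.Injective x)
    (hmin : ∀ W : Fin n → Set Y, (∀ i, IsOpen (W i)) → (∀ i, x i ∈ W i) →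
      ∃ y : Y, IsMinimalPoint T y ∧ ∀ i, ∃ m : ℕ, T^[m] y ∈ W i) :
    IsEssentialSETuple T x := by
  have hne : x ⟨0, by omega⟩ ≠ x ⟨1, by omega⟩ := fun h => by simpa using hinj h
  refine ⟨hinj, isSeqEntropyTuple_of_isIndependenceSet ⟨_, _, hne⟩ fun W hW hxW r N => ?_⟩
  exact exists_isIndependenceSet hT hfix (exists_uniform_bounded_gaps hT hmin) hW hxW r N
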